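/- arXiv:1808.07803 — 3 statements merged into one kernel-verified Lean document; each statement's English description precedes it below -/
import Mathlib

section
/- Let f : [x] → [y], g : [y] → [z] be injections and p : [k] → [x] be strictly monotone. Then ξ(g ∘ f ∘ p) = ξ(g ∘ ν(f ∘ p)) ∘ ξ(f ∘ p), where ξ(h) is the permutation of [k] making h ∘ ξ(h)⁻¹ monotone and ν(h) = h ∘ ξ(h)⁻¹. -/
/-- `ξ(g ∘ f ∘ p) = ξ(g ∘ ν(f ∘ p)) ∘ ξ(f ∘ p)` for injections `f, g` and
strictly monotone `p`. -/
theorem stmt6 (k x y z : ℕ) (f : Fin x → Fin y) (hf : Function.Injective f)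
    (g : Fin y → Fin z) (hg : Function.Injective g)
    (p : Fin k → Fin x) (hp : StrictMono p)
    -- ξ(f ∘ p):
    (ξ₁ : Equiv.Perm (Fin k)) (hξ₁ : StrictMono ((f ∘ p) ∘ ξ₁.symm))
    -- ξ(g ∘ ν(f ∘ p)), where ν(f ∘ p) = (f ∘ p) ∘ ξ₁⁻¹:
    (ξ₂ : Equiv.Perm (Fin k)) (hξ₂ : StrictMono ((g ∘ ((f ∘ p) ∘ ξ₁.symm)) ∘ ξ₂.symm))
    -- ξ(g ∘ f ∘ p):
    (ξ₃ : Equiv.Perm (Fin k)) (hξ₃ : StrictMono ((g ∘ f ∘ p) ∘ ξ₃.symm))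
    (hξ₃_unique : ∀ τ : Equiv.Perm (Fin k), StrictMono ((g ∘ f ∘ p) ∘ τ.symm) → τ = ξ₃) :
    ξ₃ = ξ₁.trans ξ₂ := by
  refine (hξ₃_unique (ξ₁.trans ξ₂) ?_).symm
  have : ((g ∘ f ∘ p) ∘ (ξ₁.trans ξ₂).symm) = ((g ∘ ((f ∘ p) ∘ ξ₁.symm)) ∘ ξ₂.symm) := by
    ext i; simp
  rw [this]; exact hξ₂
end

section
/- If T is a torsion FI-module over ℚ that is generated by finitely many elements t₁,...,t_g with t_i ∈ T[x_i], then T[n] = 0 for all sufficiently large n. -/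
/-- An FI-module over ℚ: a functor from FI (finite sets `[n]` with injections)
to ℚ-vector spaces. -/
structure FIModule where
  obj : ℕ → Type
  addCommGroup : ∀ n, AddCommGroup (obj n)
  module : ∀ n, Module ℚ (obj n)
  map : ∀ {a b : ℕ}, (Fin a ↪ Fin b) → (obj a →ₗ[ℚ] obj b)
  map_id : ∀ n : ℕ, map (Function.Embedding.refl (Fin n)) = LinearMap.id
  map_comp : ∀ {a b c : ℕ} (f : Fin a ↪ Fin b) (g : Fin b ↪ Fin c),
    map (f.trans g) = (map g).comp (map f)

attribute [instance] FIModule.addCommGroup FIModule.module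

open Classical in
/-- Any two embeddings of `Fin a` into `Fin n` differ by a permutation of `Fin n`. -/
lemma exists_perm_comp {a n : ℕ} (u v : Fin a ↪ Fin n) :
    ∃ σ : Equiv.Perm (Fin n), u.trans σ.toEmbedding = v := by
  let e : {y : Fin n // y ∈ Set.range u} ≃ {y : Fin n // y ∈ Set.range v} :=
    (Equiv.ofInjective u u.injective).symm.trans (Equiv.ofInjective v v.injective)
  refine ⟨e.extendSubtype, ?_⟩
  ext z
  have hmem : u z ∈ Set.range u := ⟨z, rfl⟩
  have := e.extendSubtype_apply_of_mem (u z) hmem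
  simp only [Function.Embedding.trans_apply, Equiv.coe_toEmbedding]
  have key : (e ⟨u z, hmem⟩ : Fin n)
      = v ((Equiv.ofInjective u u.injective).symm ⟨u z, hmem⟩) := rfl
  rw [this, key]
  have := (Equiv.ofInjective u u.injective).symm_apply_apply z
  exact congrArg Fin.val (congrArg v this)

/-- A finitely generated torsion FI-module over ℚ vanishes in all sufficiently
large degrees. -/
theorem stmt10 (T : FIModule)
    (htors : ∀ (a : ℕ) (t : T.obj a), ∃ (b : ℕ) (f : Fin a ↪ Fin b), T.map f t = 0)
    (g : ℕ) (x : Fin g → ℕ) (t : ∀ i : Fin g, T.obj (x i))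
    (hgen : ∀ (n : ℕ) (v : T.obj n),
      v ∈ Submodule.span ℚ
        {w : T.obj n | ∃ (i : Fin g) (f : Fin (x i) ↪ Fin n), w = T.map f (t i)}) :
    ∃ N : ℕ, ∀ n ≥ N, ∀ v : T.obj n, v = 0 := by
  choose b f hf using fun i => htors (x i) (t i)
  refine ⟨Finset.univ.sup b, fun n hn v => ?_⟩
  have hzero : ∀ (i : Fin g) (h : Fin (x i) ↪ Fin n), T.map h (t i) = 0 := by
    intro i h
    have hbn : b i ≤ n := le_trans (Finset.le_sup (Finset.mem_univ i)) hn
    set j : Fin (b i) ↪ Fin n := Fin.castLEEmb hbn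
    obtain ⟨σ, hσ⟩ := exists_perm_comp ((f i).trans j) h
    calc T.map h (t i) = T.map (((f i).trans j).trans σ.toEmbedding) (t i) := by rw [hσ]
      _ = T.map σ.toEmbedding (T.map j (T.map (f i) (t i))) := by
          rw [T.map_comp, T.map_comp]; rfl
      _ = 0 := by rw [hf i, map_zero, map_zero]
  have hsub : {w : T.obj n | ∃ (i : Fin g) (f : Fin (x i) ↪ Fin n), w = T.map f (t i)}
      ⊆ {(0 : T.obj n)} := by
    rintro w ⟨i, h, rfl⟩
    simp [hzero i h]
  have := hgen n v
  have hle : Submodule.span ℚ {w : T.obj n | ∃ (i : Fin g) (f : Fin (x i) ↪ Fin n),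
      w = T.map f (t i)} ≤ ⊥ := by
    rw [← Submodule.span_zero_singleton (R := ℚ) (M := T.obj n)]
    exact Submodule.span_mono hsub
  simpa using hle this
end

section
/- Define, for injections p : [k] → [x] (monotone) and q : [k] → [y] (monotone) and an injection f : [x] → [y], the block matrix V(f) over a monoid of k×k matrices, whose (p,q)-block is W(ξ(f∘p)) if ν(f∘p) = q and 0 otherwise, where W : S_k → Mat(ℚ) is a contravariant matrix representation satisfying W(σ)·W(τ) = W(τ∘σ). Then V(f)·V(g) = V(g∘f) for all injections f : [x] → [y] and g : [y] → [z]. -/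
open scoped Classical

/-- `ξ(h)`: the unique permutation such that `h ∘ ξ(h)⁻¹` is (strictly) monotone
(for `h` injective). -/
noncomputable def xi {k n : ℕ} (h : Fin k → Fin n) : Equiv.Perm (Fin k) :=
  (Tuple.sort h)⁻¹

/-- `ν(h) = h ∘ ξ(h)⁻¹`: the monotone rearrangement of `h`. -/
noncomputable def nu {k n : ℕ} (h : Fin k → Fin n) : Fin k → Fin n :=
  h ∘ (xi h).symm

/-- The block matrix `V(f)` of the induced FI-module, with rows indexed by
`OI(k,x) × [d]` and columns by `OI(k,y) × [d]`: the `(p,q)`-block is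
`W(ξ(f ∘ p))` if `ν(f ∘ p) = q`, and `0` otherwise. -/
noncomputable def Vmat {k d x y : ℕ} (W : Equiv.Perm (Fin k) → Matrix (Fin d) (Fin d) ℚ)
    (f : Fin x → Fin y) :
    Matrix ({p : Fin k → Fin x // StrictMono p} × Fin d)
           ({q : Fin k → Fin y // StrictMono q} × Fin d) ℚ :=
  fun pi qj =>
    if nu (f ∘ pi.1.1) = qj.1.1 then W (xi (f ∘ pi.1.1)) pi.2 qj.2 else 0

/-! For injective `h`, precomposing with a permutation `σ` leaves `ν(h)` unchanged and
multiplies `ξ(h)` by `σ` on the right. Applied to `g ∘ f ∘ p = (g ∘ ν(f ∘ p)) ∘ ξ(f ∘ p)` this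
gives `ν(g ∘ f ∘ p) = ν(g ∘ ν(f ∘ p))` and `ξ(g ∘ f ∘ p) = ξ(g ∘ ν(f ∘ p)) * ξ(f ∘ p)`. Since the
row `(p, i)` of `V(f)` has its only nonzero block in column `ν(f ∘ p)`, the `(p, r)`-block of
`V(f) V(g)` is `W(ξ(f ∘ p)) W(ξ(g ∘ ν(f ∘ p))) = W(ξ(g ∘ f ∘ p))` if `ν(g ∘ f ∘ p) = r`
and `0` otherwise. -/

section Rearrangement

variable {k n : ℕ}

lemma nu_comp_xi (h : Fin k → Fin n) : nu h ∘ xi h = h := by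
  funext i
  simp [nu]

lemma strictMono_nu {h : Fin k → Fin n} (hinj : Function.Injective h) : StrictMono (nu h) :=
  (Tuple.monotone_sort h).strictMono_of_injective (hinj.comp (Tuple.sort h).injective)

lemma nu_comp_perm (h : Fin k → Fin n) (σ : Equiv.Perm (Fin k)) : nu (h ∘ σ) = nu h :=
  Tuple.comp_perm_comp_sort_eq_comp_sort

lemma xi_comp_perm {h : Fin k → Fin n} (hinj : Function.Injective h) (σ : Equiv.Perm (Fin k)) :
    xi (h ∘ σ) = xi h * σ := by
  have hsort : σ * Tuple.sort (h ∘ σ) = Tuple.sort h :=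
    DFunLike.coe_injective (hinj.comp_left (nu_comp_perm h σ))
  rw [xi, xi, ← hsort, mul_inv_rev, inv_mul_cancel_right]

lemma nu_comp_eq_nu_comp_nu {m : ℕ} (g : Fin n → Fin m) (h : Fin k → Fin n) :
    nu (g ∘ h) = nu (g ∘ nu h) := by
  conv_lhs => rw [← nu_comp_xi h, ← Function.comp_assoc, nu_comp_perm]

lemma xi_comp_eq_xi_comp_nu_mul {m : ℕ} {g : Fin n → Fin m} {h : Fin k → Fin n}
    (hinj : Function.Injective (g ∘ h)) : xi (g ∘ h) = xi (g ∘ nu h) * xi h := by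
  have hinj' : Function.Injective (g ∘ nu h) := hinj.comp (xi h).symm.injective
  conv_lhs => rw [← nu_comp_xi h, ← Function.comp_assoc, xi_comp_perm hinj']

end Rearrangement

lemma Vmat_mul_apply {k d x y : ℕ} {γ : Type*} [Fintype γ]
    (W : Equiv.Perm (Fin k) → Matrix (Fin d) (Fin d) ℚ) {f : Fin x → Fin y}
    (hf : Function.Injective f) (N : Matrix ({q : Fin k → Fin y // StrictMono q} × Fin d) γ ℚ)
    (p : {p : Fin k → Fin x // StrictMono p}) (i : Fin d) (c : γ) :
    (Vmat W f * N) (p, i) c =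
      ∑ l, W (xi (f ∘ p.1)) i l *
        N (⟨nu (f ∘ p.1), strictMono_nu (hf.comp p.2.injective)⟩, l) c := by
  rw [Matrix.mul_apply, Fintype.sum_prod_type,
    Finset.sum_eq_single_of_mem ⟨nu (f ∘ p.1), strictMono_nu (hf.comp p.2.injective)⟩
      (Finset.mem_univ _)]
  · simp [Vmat]
  · intro q _ hq
    have hne : nu (f ∘ p.1) ≠ q.1 := fun h => hq (Subtype.ext h.symm)
    simp [Vmat, hne]

/-- Lemma (rep): `V(f) · V(g) = V(g ∘ f)` whenever `W` is a contravariant matrix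
representation of the symmetric group `S_k`. -/
theorem stmt11 (k d x y z : ℕ) (W : Equiv.Perm (Fin k) → Matrix (Fin d) (Fin d) ℚ)
    (hW : ∀ σ τ : Equiv.Perm (Fin k), W σ * W τ = W (τ * σ))
    (f : Fin x → Fin y) (hf : Function.Injective f)
    (g : Fin y → Fin z) (hg : Function.Injective g) :
    Vmat W f * Vmat W g = Vmat W (g ∘ f) := by
  ext ⟨p, i⟩ ⟨r, j⟩
  have hgfp : Function.Injective (g ∘ f ∘ p.1) := hg.comp (hf.comp p.2.injective)
  rw [Vmat_mul_apply W hf]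
  simp only [Vmat, Function.comp_assoc, nu_comp_eq_nu_comp_nu g (f ∘ p.1),
    xi_comp_eq_xi_comp_nu_mul hgfp]
  split_ifs
  · rw [← hW, Matrix.mul_apply]
  · simp
end
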